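/- Let u, v : ℝ² → ℂ be twice continuously differentiable functions and let β ∈ ℂ with β ≠ 0. Define A₁ = −∂_x u − i·∂_y v + β·sin((u+v)/2) + β⁻¹·sin((u−v)/2) and A₂ = −i·∂_y u − ∂_x v − β·sin((u+v)/2) + β⁻¹·sin((u−v)/2). Then at every point of ℝ²: ∂_x A₂ − i·∂_y A₁ = −Δv + sin v + A₁·( (β/2)·cos((u+v)/2) − (β⁻¹/2)·cos((u−v)/2) ) + A₂·( (β/2)·cos((u+v)/2) + (β⁻¹/2)·cos((u−v)/2) ), where Δv = ∂_x²v + ∂_y²v and sin, cos are the complex sine and cosine. -/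

import Mathlib

/-- Partial derivative in the first variable of a complex-valued function on ℝ². -/
noncomputable def pdx (u : ℝ → ℝ → ℂ) (x y : ℝ) : ℂ := deriv (fun s => u s y) x

/-- Partial derivative in the second variable of a complex-valued function on ℝ². -/
noncomputable def pdy (u : ℝ → ℝ → ℂ) (x y : ℝ) : ℂ := deriv (fun t => u x t) y

/-- The Laplacian of a complex-valued function on ℝ². -/
noncomputable def lap (u : ℝ → ℝ → ℂ) (x y : ℝ) : ℂ := pdx (pdx u) x y + pdy (pdy u) x y

/-- First residual of the Bäcklund transformation system with parameter β. -/
noncomputable def A₁ (β : ℂ) (u v : ℝ → ℝ → ℂ) (x y : ℝ) : ℂ :=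
  -pdx u x y - Complex.I * pdy v x y + β * Complex.sin ((u x y + v x y) / 2) +
    β⁻¹ * Complex.sin ((u x y - v x y) / 2)

/-- Second residual of the Bäcklund transformation system with parameter β. -/
noncomputable def A₂ (β : ℂ) (u v : ℝ → ℝ → ℂ) (x y : ℝ) : ℂ :=
  -Complex.I * pdy u x y - pdx v x y - β * Complex.sin ((u x y + v x y) / 2) +
    β⁻¹ * Complex.sin ((u x y - v x y) / 2)

/-!
Differentiating the residuals, `∂ₓA₂ - i ∂ᵧA₁` contains `-i ∂ₓ∂ᵧu + i ∂ᵧ∂ₓu`, which vanishes by the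
symmetry of second derivatives of a `C²` function, and `-∂ₓ²v + i² ∂ᵧ²v = -Δv`. The remaining first-order
terms are exactly the products of `A₁`, `A₂` with the half-angle cosines, up to the term
`(β β⁻¹) (sin ((u+v)/2) cos ((u-v)/2) - cos ((u+v)/2) sin ((u-v)/2)) = sin v`.
-/

section PartialDerivatives

variable {f : ℝ → ℝ → ℂ} {x y : ℝ}

theorem hasDerivAt_fderiv_apply_fst
    (hf : DifferentiableAt ℝ (fun p : ℝ × ℝ => f p.1 p.2) (x, y)) :
    HasDerivAt (fun s => f s y) (fderiv ℝ (fun p : ℝ × ℝ => f p.1 p.2) (x, y) (1, 0)) x :=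
  hf.hasFDerivAt.comp_hasDerivAt (f := fun s : ℝ => (s, y)) x
    ((hasDerivAt_id x).prodMk (hasDerivAt_const x y))

theorem hasDerivAt_fderiv_apply_snd
    (hf : DifferentiableAt ℝ (fun p : ℝ × ℝ => f p.1 p.2) (x, y)) :
    HasDerivAt (fun t => f x t) (fderiv ℝ (fun p : ℝ × ℝ => f p.1 p.2) (x, y) (0, 1)) y :=
  hf.hasFDerivAt.comp_hasDerivAt (f := fun t : ℝ => (x, t)) y
    ((hasDerivAt_const y x).prodMk (hasDerivAt_id y))

theorem pdx_eq_fderiv (hf : DifferentiableAt ℝ (fun p : ℝ × ℝ => f p.1 p.2) (x, y)) :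
    pdx f x y = fderiv ℝ (fun p : ℝ × ℝ => f p.1 p.2) (x, y) (1, 0) :=
  (hasDerivAt_fderiv_apply_fst hf).deriv

theorem pdy_eq_fderiv (hf : DifferentiableAt ℝ (fun p : ℝ × ℝ => f p.1 p.2) (x, y)) :
    pdy f x y = fderiv ℝ (fun p : ℝ × ℝ => f p.1 p.2) (x, y) (0, 1) :=
  (hasDerivAt_fderiv_apply_snd hf).deriv

theorem hasDerivAt_pdx (hf : DifferentiableAt ℝ (fun p : ℝ × ℝ => f p.1 p.2) (x, y)) :
    HasDerivAt (fun s => f s y) (pdx f x y) x :=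
  pdx_eq_fderiv hf ▸ hasDerivAt_fderiv_apply_fst hf

theorem hasDerivAt_pdy (hf : DifferentiableAt ℝ (fun p : ℝ × ℝ => f p.1 p.2) (x, y)) :
    HasDerivAt (fun t => f x t) (pdy f x y) y :=
  pdy_eq_fderiv hf ▸ hasDerivAt_fderiv_apply_snd hf

theorem contDiff_pdx {n : WithTop ℕ∞} (hf : ContDiff ℝ (n + 1) (fun p : ℝ × ℝ => f p.1 p.2)) :
    ContDiff ℝ n (fun p : ℝ × ℝ => pdx f p.1 p.2) := by
  have hd := hf.differentiable (by simp)
  simp only [pdx_eq_fderiv (hd _)]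
  exact (hf.fderiv_right le_rfl).clm_apply contDiff_const

theorem contDiff_pdy {n : WithTop ℕ∞} (hf : ContDiff ℝ (n + 1) (fun p : ℝ × ℝ => f p.1 p.2)) :
    ContDiff ℝ n (fun p : ℝ × ℝ => pdy f p.1 p.2) := by
  have hd := hf.differentiable (by simp)
  simp only [pdy_eq_fderiv (hd _)]
  exact (hf.fderiv_right le_rfl).clm_apply contDiff_const

theorem pdx_pdy_comm (hf : ContDiff ℝ 2 (fun p : ℝ × ℝ => f p.1 p.2)) (x y : ℝ) :
    pdx (pdy f) x y = pdy (pdx f) x y := by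
  set F := fun p : ℝ × ℝ => f p.1 p.2
  have hF' : Differentiable ℝ (fderiv ℝ F) :=
    (hf.fderiv_right (m := 1) le_rfl).differentiable one_ne_zero
  have hd_pdx : Differentiable ℝ (fun p : ℝ × ℝ => pdx f p.1 p.2) :=
    (contDiff_pdx (n := 1) hf).differentiable one_ne_zero
  have hd_pdy : Differentiable ℝ (fun p : ℝ × ℝ => pdy f p.1 p.2) :=
    (contDiff_pdy (n := 1) hf).differentiable one_ne_zero
  have hd := hf.differentiable two_ne_zero
  have second_deriv (v w : ℝ × ℝ) :
      fderiv ℝ (fun p => fderiv ℝ F p v) (x, y) w = fderiv ℝ (fderiv ℝ F) (x, y) w v := by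
    rw [fderiv_clm_apply (hF' _) (differentiableAt_const v)]
    simp
  rw [pdx_eq_fderiv (hd_pdy _), pdy_eq_fderiv (hd_pdx _)]
  simp only [pdx_eq_fderiv (hd _), pdy_eq_fderiv (hd _)]
  rw [second_deriv, second_deriv]
  exact hf.contDiffAt.isSymmSndFDerivAt (by simp [minSmoothness_of_isRCLikeNormedField]) _ _

end PartialDerivatives

section Backlund

variable {u v : ℝ → ℝ → ℂ}

open Complex

theorem pdx_A₂ (β : ℂ) (hu : ContDiff ℝ 2 (fun p : ℝ × ℝ => u p.1 p.2))
    (hv : ContDiff ℝ 2 (fun p : ℝ × ℝ => v p.1 p.2)) (x y : ℝ) :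
    pdx (A₂ β u v) x y =
      -I * pdx (pdy u) x y - pdx (pdx v) x y -
        β * (cos ((u x y + v x y) / 2) * ((pdx u x y + pdx v x y) / 2)) +
        β⁻¹ * (cos ((u x y - v x y) / 2) * ((pdx u x y - pdx v x y) / 2)) := by
  have hux := hasDerivAt_pdx (hu.differentiable two_ne_zero (x, y))
  have hvx := hasDerivAt_pdx (hv.differentiable two_ne_zero (x, y))
  have huyx := hasDerivAt_pdx ((contDiff_pdy (n := 1) hu).differentiable one_ne_zero (x, y))
  have hvxx := hasDerivAt_pdx ((contDiff_pdx (n := 1) hv).differentiable one_ne_zero (x, y))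
  have hsin_add := (hasDerivAt_sin _).comp x ((hux.add hvx).div_const 2)
  have hsin_sub := (hasDerivAt_sin _).comp x ((hux.sub hvx).div_const 2)
  exact ((((huyx.const_mul (-I)).sub hvxx).sub (hsin_add.const_mul β)).add
    (hsin_sub.const_mul β⁻¹)).deriv

theorem pdy_A₁ (β : ℂ) (hu : ContDiff ℝ 2 (fun p : ℝ × ℝ => u p.1 p.2))
    (hv : ContDiff ℝ 2 (fun p : ℝ × ℝ => v p.1 p.2)) (x y : ℝ) :
    pdy (A₁ β u v) x y =
      -pdy (pdx u) x y - I * pdy (pdy v) x y +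
        β * (cos ((u x y + v x y) / 2) * ((pdy u x y + pdy v x y) / 2)) +
        β⁻¹ * (cos ((u x y - v x y) / 2) * ((pdy u x y - pdy v x y) / 2)) := by
  have huy := hasDerivAt_pdy (hu.differentiable two_ne_zero (x, y))
  have hvy := hasDerivAt_pdy (hv.differentiable two_ne_zero (x, y))
  have huxy := hasDerivAt_pdy ((contDiff_pdx (n := 1) hu).differentiable one_ne_zero (x, y))
  have hvyy := hasDerivAt_pdy ((contDiff_pdy (n := 1) hv).differentiable one_ne_zero (x, y))
  have hsin_add := (hasDerivAt_sin _).comp y ((huy.add hvy).div_const 2)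
  have hsin_sub := (hasDerivAt_sin _).comp y ((huy.sub hvy).div_const 2)
  exact (((huxy.neg.sub (hvyy.const_mul I)).add (hsin_add.const_mul β)).add
    (hsin_sub.const_mul β⁻¹)).deriv

end Backlund

theorem backlund_residual_identity (β : ℂ) (hβ : β ≠ 0) (u v : ℝ → ℝ → ℂ)
    (hu : ContDiff ℝ 2 (fun p : ℝ × ℝ => u p.1 p.2))
    (hv : ContDiff ℝ 2 (fun p : ℝ × ℝ => v p.1 p.2)) :
    ∀ x y : ℝ,
      pdx (A₂ β u v) x y - Complex.I * pdy (A₁ β u v) x y =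
        -lap v x y + Complex.sin (v x y) +
          A₁ β u v x y * ((β / 2) * Complex.cos ((u x y + v x y) / 2) -
            (β⁻¹ / 2) * Complex.cos ((u x y - v x y) / 2)) +
          A₂ β u v x y * ((β / 2) * Complex.cos ((u x y + v x y) / 2) +
            (β⁻¹ / 2) * Complex.cos ((u x y - v x y) / 2)) := by
  intro x y
  have sin_v : Complex.sin (v x y) =
      Complex.sin ((u x y + v x y) / 2) * Complex.cos ((u x y - v x y) / 2) -
        Complex.cos ((u x y + v x y) / 2) * Complex.sin ((u x y - v x y) / 2) := by
    rw [← Complex.sin_sub]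
    ring_nf
  rw [pdx_A₂ β hu hv, pdy_A₁ β hu hv, pdx_pdy_comm hu, sin_v]
  simp only [lap, A₁, A₂]
  linear_combination pdy (pdy v) x y * Complex.I_mul_I +
    (Complex.sin ((u x y + v x y) / 2) * Complex.cos ((u x y - v x y) / 2) -
      Complex.cos ((u x y + v x y) / 2) * Complex.sin ((u x y - v x y) / 2)) * mul_inv_cancel₀ hβ
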